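/- arXiv:2102.08521 — 2 statements merged into one kernel-verified Lean document; each statement's English description precedes it below -/
import Mathlib

section
/- For each 2 ≤ k ≤ n, the function J_k = (-1)^{k-1} ((k-1)/k!) (z_{n-1})^k + Σ_{a=2}^{k} ((-1)^{k-a}/(k-a)!) z_{n-a} (z_n)^{a-1} (z_{n-1})^{k-a} on J^n(ℝ,ℝ) is a t-independent first integral of the truncated total derivative, i.e. D_t J_k = 0 where D_t = ∂_t + Σ_{i=0}^{n-1} z_{i+1} ∂_{z_i}. In particular J_2 = -(1/2)(z_{n-1})^2 + z_{n-2} z_n satisfies D_t J_2 = 0. -/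
/-!
`D_t` is the derivative along the vector field `∂_t + ∑_{i<n} z_{i+1} ∂_{z_i}`, so it is a
derivation with `D_t z_j = z_{j+1}` for `j < n` and `D_t z_n = 0`. With `c_j = (-1)^j / j!` and
`g_a = (k - a) c_{k-a} z_{n-a} z_n^a z_{n-1}^{k-a-1}`, the `a`-th summand of `J_k` has
`D_t`-derivative `g_a - g_{a-1}`, because `(j + 1) c_{j+1} = -c_j`. The sum therefore telescopes
to `g_k - g_1 = -g_1`, which cancels the derivative of the leading term `z_{n-1}^k`.
-/

open Finset

/-- Partial derivative of a function on `ℝ^m` in the `i`-th coordinate direction. -/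
noncomputable def pderiv' (m : ℕ) (i : Fin m) (f : (Fin m → ℝ) → ℝ) : (Fin m → ℝ) → ℝ :=
  fun x => fderiv ℝ f x (Pi.single i 1)

/-- Index of the jet coordinate `z_j` among the coordinates `(t, z_0, …, z_n)` of
`J^n(ℝ,ℝ) ≅ ℝ^{n+2}`; coordinate `0` is `t` and coordinate `j+1` is `z_j` (for `j ≤ n`). -/
def zidx (n j : ℕ) : Fin (n + 2) := ⟨min (j + 1) (n + 1), Nat.lt_succ_of_le (min_le_right _ _)⟩

/-- The truncated total derivative `D_t f = ∂f/∂t + ∑_{i=0}^{n-1} z_{i+1} ∂f/∂z_i`. -/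
noncomputable def Dt (n : ℕ) (f : (Fin (n + 2) → ℝ) → ℝ) : (Fin (n + 2) → ℝ) → ℝ :=
  fun x => pderiv' (n + 2) 0 f x +
    ∑ i ∈ Finset.range n, x (zidx n (i + 1)) * pderiv' (n + 2) (zidx n i) f x

/-- The `t`-independent first integral
`J_k = (-1)^{k-1} ((k-1)/k!) z_{n-1}^k + ∑_{a=2}^{k} ((-1)^{k-a}/(k-a)!) z_{n-a} z_n^{a-1} z_{n-1}^{k-a}`. -/
noncomputable def Jfun (n k : ℕ) : (Fin (n + 2) → ℝ) → ℝ :=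
  fun x => (-1 : ℝ) ^ (k - 1) * (((k : ℝ) - 1) / (Nat.factorial k : ℝ)) * (x (zidx n (n - 1))) ^ k +
    ∑ a ∈ Finset.Icc 2 k, ((-1 : ℝ) ^ (k - a) / (Nat.factorial (k - a) : ℝ)) *
      x (zidx n (n - a)) * (x (zidx n n)) ^ (a - 1) * (x (zidx n (n - 1))) ^ (k - a)

open scoped Nat

noncomputable def truncTotalField (n : ℕ) (x : Fin (n + 2) → ℝ) : Fin (n + 2) → ℝ :=
  Pi.single 0 1 + ∑ i ∈ range n, x (zidx n (i + 1)) • Pi.single (zidx n i) 1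

lemma zidx_ne_zero (n j : ℕ) : zidx n j ≠ 0 := by
  simp only [zidx, Ne, Fin.ext_iff, Fin.val_zero]; omega

lemma zidx_eq_zidx_iff {n i j : ℕ} (hi : i < n) : zidx n j = zidx n i ↔ j = i := by
  simp only [zidx, Fin.ext_iff]; omega

lemma truncTotalField_zidx (n j : ℕ) (x : Fin (n + 2) → ℝ) :
    truncTotalField n x (zidx n j) = if j < n then x (zidx n (j + 1)) else 0 := by
  simp only [truncTotalField, Pi.add_apply, Finset.sum_apply, Pi.smul_apply, Pi.single_apply,
    zidx_ne_zero, if_false, smul_eq_mul, mul_ite, mul_one, mul_zero, zero_add]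
  rw [sum_congr rfl (g := fun i => if j = i then x (zidx n (i + 1)) else 0)
    fun i hi => by simp only [zidx_eq_zidx_iff (mem_range.1 hi)], sum_ite_eq]
  simp only [mem_range]

section Dt

variable {n : ℕ} {f g : (Fin (n + 2) → ℝ) → ℝ} {x : Fin (n + 2) → ℝ}

lemma Dt_eq_fderiv (f : (Fin (n + 2) → ℝ) → ℝ) (x : Fin (n + 2) → ℝ) :
    Dt n f x = fderiv ℝ f x (truncTotalField n x) := by
  simp [Dt, pderiv', truncTotalField, map_sum]

lemma Dt_add (hf : DifferentiableAt ℝ f x) (hg : DifferentiableAt ℝ g x) :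
    Dt n (fun y => f y + g y) x = Dt n f x + Dt n g x := by
  simp [Dt_eq_fderiv, fderiv_fun_add hf hg]

lemma Dt_mul (hf : DifferentiableAt ℝ f x) (hg : DifferentiableAt ℝ g x) :
    Dt n (fun y => f y * g y) x = Dt n f x * g x + f x * Dt n g x := by
  simp [Dt_eq_fderiv, fderiv_fun_mul hf hg]; ring

lemma Dt_pow (m : ℕ) (hf : DifferentiableAt ℝ f x) :
    Dt n (fun y => f y ^ m) x = m * f x ^ (m - 1) * Dt n f x := by
  simp [Dt_eq_fderiv, fderiv_fun_pow m hf]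

lemma Dt_sum {ι : Type*} (s : Finset ι) {F : ι → (Fin (n + 2) → ℝ) → ℝ}
    (hF : ∀ i ∈ s, DifferentiableAt ℝ (F i) x) :
    Dt n (fun y => ∑ i ∈ s, F i y) x = ∑ i ∈ s, Dt n (F i) x := by
  simp [Dt_eq_fderiv, fderiv_fun_sum hF]

lemma Dt_const (c : ℝ) (x : Fin (n + 2) → ℝ) : Dt n (fun _ => c) x = 0 := by
  simp [Dt_eq_fderiv]

lemma Dt_zidx (j : ℕ) (x : Fin (n + 2) → ℝ) :
    Dt n (fun y => y (zidx n j)) x = if j < n then x (zidx n (j + 1)) else 0 := by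
  simp [Dt_eq_fderiv, fderiv_apply, truncTotalField_zidx]

end Dt

lemma succ_mul_neg_one_pow_div_factorial (j : ℕ) :
    ((j + 1 : ℕ) : ℝ) * ((-1) ^ (j + 1) / (j + 1)!) = -((-1) ^ j / j !) := by
  rw [Nat.factorial_succ, pow_succ]
  push_cast
  field_simp

lemma firstIntegral_telescope {k : ℕ} (hk : 2 ≤ k) (v : ℝ) (w : ℕ → ℝ) :
    (-1) ^ (k - 1) * ((k - 1) / k !) * (k * w 1 ^ (k - 1) * v) +
      ∑ a ∈ Icc 2 k, (-1) ^ (k - a) / (k - a)! *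
        (w (a - 1) * v ^ (a - 1) * w 1 ^ (k - a) +
          w a * v ^ (a - 1) * ((k - a : ℕ) * w 1 ^ (k - a - 1) * v)) = 0 := by
  set g : ℕ → ℝ := fun a => ((k - a : ℕ) : ℝ) * ((-1) ^ (k - a) / (k - a)!) * w a * v ^ a *
    w 1 ^ (k - a - 1) with hg
  have hstep : ∀ a ∈ Icc 2 k, (-1) ^ (k - a) / (k - a)! *
      (w (a - 1) * v ^ (a - 1) * w 1 ^ (k - a) +
        w a * v ^ (a - 1) * ((k - a : ℕ) * w 1 ^ (k - a - 1) * v)) = g a - g (a - 1) := by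
    intro a ha
    obtain ⟨b, rfl⟩ : ∃ b, a = b + 1 := ⟨a - 1, by grind⟩
    have hkb : k - b = k - (b + 1) + 1 := by grind
    simp only [hg, Nat.add_sub_cancel, hkb, succ_mul_neg_one_pow_div_factorial, pow_succ v b]
    ring
  have hgk : g k = 0 := by simp [hg]
  have hg1 : g 1 = (-1) ^ (k - 1) * ((k - 1) / k !) * (k * w 1 ^ (k - 1) * v) := by
    obtain ⟨m, rfl⟩ : ∃ m, k = m + 2 := ⟨k - 2, by omega⟩
    simp only [hg, Nat.add_sub_cancel, show m + 2 - 1 = m + 1 by omega, Nat.factorial_succ m.succ]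
    push_cast
    field_simp
    ring
  have htelescope := sum_Icc_sub hk fun i => g (i - 1)
  simp only [Nat.add_sub_cancel] at htelescope
  rw [sum_congr rfl hstep, htelescope, hgk, hg1]
  ring

lemma Dt_Jfun {n k : ℕ} (hk : 2 ≤ k) (hkn : k ≤ n) (x : Fin (n + 2) → ℝ) :
    Dt n (Jfun n k) x =
      (-1) ^ (k - 1) * ((k - 1) / k !) * (k * x (zidx n (n - 1)) ^ (k - 1) * x (zidx n n)) +
      ∑ a ∈ Icc 2 k, (-1) ^ (k - a) / (k - a)! *
        (x (zidx n (n - (a - 1))) * x (zidx n n) ^ (a - 1) * x (zidx n (n - 1)) ^ (k - a) +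
          x (zidx n (n - a)) * x (zidx n n) ^ (a - 1) *
            ((k - a : ℕ) * x (zidx n (n - 1)) ^ (k - a - 1) * x (zidx n n))) := by
  unfold Jfun
  rw [Dt_add (by fun_prop) (by fun_prop), Dt_sum _ (fun a _ => by fun_prop)]
  congr 1
  · simp (disch := fun_prop) only [Dt_mul, Dt_const, Dt_pow, Dt_zidx]
    rw [if_pos (by omega), Nat.sub_add_cancel (by omega)]
    ring
  · refine sum_congr rfl fun a ha => ?_
    rw [mem_Icc] at ha
    simp (disch := fun_prop) only [Dt_mul, Dt_const, Dt_pow, Dt_zidx, lt_irrefl, if_false,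
      if_pos (show n - a < n by omega), if_pos (show n - 1 < n by omega),
      Nat.sub_add_cancel (show 1 ≤ n by omega), show n - a + 1 = n - (a - 1) by omega]
    ring

theorem Dt_Jfun_eq_zero {n k : ℕ} (hk : 2 ≤ k) (hkn : k ≤ n) (x : Fin (n + 2) → ℝ) :
    Dt n (Jfun n k) x = 0 := by
  rw [Dt_Jfun hk hkn]
  exact firstIntegral_telescope hk _ fun a => x (zidx n (n - a))

lemma Jfun_two (n : ℕ) :
    Jfun n 2 = fun y =>
      -(1 / 2 : ℝ) * (y (zidx n (n - 1))) ^ 2 + y (zidx n (n - 2)) * y (zidx n n) := by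
  funext y
  norm_num [Jfun]

/-- For `2 ≤ k ≤ n`, `D_t J_k = 0`; in particular
`J_2 = -(1/2) z_{n-1}² + z_{n-2} z_n` satisfies `D_t J_2 = 0`. -/
theorem stmt_3 (n : ℕ) :
    (∀ k : ℕ, 2 ≤ k → k ≤ n → ∀ x : Fin (n + 2) → ℝ, Dt n (Jfun n k) x = 0) ∧
    (2 ≤ n → ∀ x : Fin (n + 2) → ℝ,
      Dt n (fun y => -(1 / 2 : ℝ) * (y (zidx n (n - 1))) ^ 2 +
        y (zidx n (n - 2)) * y (zidx n n)) x = 0) :=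
  ⟨fun _ hk hkn => Dt_Jfun_eq_zero hk hkn,
    fun hn => Jfun_two n ▸ Dt_Jfun_eq_zero le_rfl hn⟩
end

section
/- (Kalman rank condition, sufficiency) Let A be an n×n real matrix and B an n×m real matrix, and suppose the n×(nm) controllability matrix [B, AB, A²B, …, A^{n-1}B] has rank n. Then the linear control system ẋ = Ax + Bu is controllable: for any p, q ∈ ℝⁿ and any t₀ < t₁ there exists a continuous control u : [t₀,t₁] → ℝᵐ whose corresponding solution satisfies x(t₀) = p and x(t₁) = q. -/
/-!
For `c ∈ ℝⁿ`, the control `u_c(s) = Bᵀ e^{(t₁-s)Aᵀ} c` drives the variation-of-constants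
solution from `p` at time `t₀` to `e^{(t₁-t₀)A} p + W c` at time `t₁`, where `W` is the
controllability Gramian; so it suffices that `W` is invertible. If `W c = 0`, then
`0 = cᵀ W c = ∫ |u_c|²`, so `cᵀ e^{rA} B` vanishes for `r` in an open interval. Differentiating
`k` times gives `cᵀ e^{rA} AᵏB = 0` there, and the rank condition forces `cᵀ e^{rA} = 0`,
hence `c = 0`.
-/

open NormedSpace Set Matrix

attribute [local instance] Matrix.linftyOpNormedAddCommGroup Matrix.linftyOpNormedSpace

section

variable {ι κ : Type*} [Fintype ι] [Fintype κ]

theorem Matrix.vecMul_injective_of_rank_eq_card {K : Type*} [Field K] {M : Matrix ι κ K}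
    (h : M.rank = Fintype.card ι) : Function.Injective M.vecMul := by
  rw [vecMul_injective_iff, linearIndependent_iff_card_eq_finrank_span, Set.finrank,
    ← rank_eq_finrank_span_row, h]

section Calculus

variable {𝕜 : Type*} [NontriviallyNormedField 𝕜] {t : 𝕜}

theorem HasDerivAt.eq_zero_of_eqOn_zero {E : Type*} [NormedAddCommGroup E] [NormedSpace 𝕜 E]
    {f : 𝕜 → E} {f' : E} {U : Set 𝕜} (hf : HasDerivAt f f' t) (hU : IsOpen U) (ht : t ∈ U)
    (hf0 : EqOn f 0 U) : f' = 0 :=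
  hf.unique <| (hasDerivAt_const t (0 : E)).congr_of_eventuallyEq <|
    Filter.eventually_of_mem (hU.mem_nhds ht) hf0

variable [CompleteSpace 𝕜]

theorem HasDerivAt.matrix_mulVec {M : 𝕜 → Matrix ι κ 𝕜} {M' : Matrix ι κ 𝕜} {v : 𝕜 → κ → 𝕜}
    {v' : κ → 𝕜} (hM : HasDerivAt M M' t) (hv : HasDerivAt v v' t) :
    HasDerivAt (fun s => M s *ᵥ v s) (M t *ᵥ v' + M' *ᵥ v t) t :=
  ContinuousLinearMap.hasDerivAt_of_bilinear
    (B := (mulVecBilin (m := ι) (n := κ) (A := 𝕜) 𝕜 𝕜).toContinuousBilinearMap)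
    (fun _ => hM) fun _ => hv

theorem HasDerivAt.const_vecMul {M : 𝕜 → Matrix ι κ 𝕜} {M' : Matrix ι κ 𝕜} (w : ι → 𝕜)
    (hM : HasDerivAt M M' t) : HasDerivAt (fun s => w ᵥ* M s) (w ᵥ* M') t :=
  (vecMulBilin (n := κ) 𝕜 𝕜 w).toContinuousLinearMap.hasFDerivAt.comp_hasDerivAt t hM

theorem HasDerivAt.vecMul_const {v : 𝕜 → ι → 𝕜} {v' : ι → 𝕜} (hv : HasDerivAt v v' t)
    (M : Matrix ι κ 𝕜) : HasDerivAt (fun s => v s ᵥ* M) (v' ᵥ* M) t :=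
  ((vecMulBilin 𝕜 𝕜).flip M).toContinuousLinearMap.hasFDerivAt.comp_hasDerivAt t hv

end Calculus

theorem intervalIntegral.integral_mulVec {f : ℝ → κ → ℝ} {a b : ℝ} (M : Matrix ι κ ℝ)
    (hf : IntervalIntegrable f MeasureTheory.volume a b) :
    ∫ s in a..b, M *ᵥ f s = M *ᵥ ∫ s in a..b, f s :=
  (mulVecLin M).toContinuousLinearMap.intervalIntegral_comp_comm hf

theorem intervalIntegral.integral_mulVec_const {M : ℝ → Matrix ι κ ℝ} {a b : ℝ} (v : κ → ℝ)
    (hM : Continuous M) :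
    (∫ s in a..b, M s) *ᵥ v = ∫ s in a..b, M s *ᵥ v :=
  (((mulVecBilin (m := ι) (n := κ) (A := ℝ) ℝ ℝ).flip v).toContinuousLinearMap
    |>.intervalIntegral_comp_comm (hM.intervalIntegrable a b)).symm

theorem intervalIntegral.dotProduct_integral {f : ℝ → ι → ℝ} {a b : ℝ} (v : ι → ℝ)
    (hf : IntervalIntegrable f MeasureTheory.volume a b) :
    v ⬝ᵥ ∫ s in a..b, f s = ∫ s in a..b, v ⬝ᵥ f s :=
  ((dotProductBilin ℝ ℝ v).toContinuousLinearMap.intervalIntegral_comp_comm hf).symm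

theorem Matrix.exp_add_smul [DecidableEq ι] (A : Matrix ι ι ℝ) (s t : ℝ) :
    exp ((s + t) • A) = exp (s • A) * exp (t • A) := by
  rw [add_smul, exp_add_of_commute _ _ (((Commute.refl A).smul_left s).smul_right t)]

theorem Matrix.hasDerivAt_exp_smul [DecidableEq ι] (A : Matrix ι ι ℝ) (t : ℝ) :
    HasDerivAt (fun t : ℝ => exp (t • A)) (A * exp (t • A)) t := by
  -- Local to this proof: as global instances they would make `*` and `exp` elaborate to terms
  -- that the `Matrix` lemmas no longer match syntactically.
  let _ := Matrix.linftyOpNormedRing (n := ι) (α := ℝ)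
  let _ := Matrix.linftyOpNormedAlgebra (n := ι) (R := ℝ) (α := ℝ)
  exact hasDerivAt_exp_smul_const' A t

theorem Matrix.continuous_exp_smul [DecidableEq ι] (A : Matrix ι ι ℝ) :
    Continuous fun t : ℝ => exp (t • A) :=
  continuous_iff_continuousAt.2 fun t => (hasDerivAt_exp_smul A t).continuousAt

end

namespace LinearControl

variable {ι κ : Type*} [Fintype ι] [DecidableEq ι]

def controllabilityMatrix {R : Type*} [Semiring R] (N : ℕ) (A : Matrix ι ι R)
    (B : Matrix ι κ R) : Matrix ι (Fin N × κ) R :=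
  of fun i jk => (A ^ (jk.1 : ℕ) * B) i jk.2

theorem eq_zero_of_forall_vecMul_pow_mul_eq_zero [Fintype κ] {K : Type*} [Field K] {N : ℕ}
    {A : Matrix ι ι K} {B : Matrix ι κ K}
    (hrank : (controllabilityMatrix N A B).rank = Fintype.card ι) {w : ι → K}
    (hw : ∀ k : Fin N, w ᵥ* (A ^ (k : ℕ) * B) = 0) : w = 0 :=
  vecMul_injective_of_rank_eq_card hrank <| by
    ext ⟨k, j⟩
    simp only [zero_vecMul]
    exact congrFun (hw k) j

variable (A : Matrix ι ι ℝ)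

theorem continuous_exp_sub_smul (t1 : ℝ) : Continuous fun s : ℝ => exp ((t1 - s) • A) :=
  (continuous_exp_smul A).comp (continuous_const.sub continuous_id)

noncomputable def variationOfConstants (f : ℝ → ι → ℝ) (t0 : ℝ) (p : ι → ℝ) (t : ℝ) : ι → ℝ :=
  exp ((t - t0) • A) *ᵥ p + ∫ s in t0..t, exp ((t - s) • A) *ᵥ f s

theorem variationOfConstants_self (f : ℝ → ι → ℝ) (t0 : ℝ) (p : ι → ℝ) :
    variationOfConstants A f t0 p t0 = p := by
  simp [variationOfConstants]

theorem variationOfConstants_eq {f : ℝ → ι → ℝ} (hf : Continuous f) (t0 : ℝ) (p : ι → ℝ)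
    (t : ℝ) : variationOfConstants A f t0 p t =
      exp (t • A) *ᵥ (exp ((-t0) • A) *ᵥ p + ∫ s in t0..t, exp ((-s) • A) *ᵥ f s) := by
  have hint : IntervalIntegrable (fun s => exp ((-s) • A) *ᵥ f s) MeasureTheory.volume t0 t :=
    (((continuous_exp_smul A).comp continuous_neg).matrix_mulVec hf).intervalIntegrable t0 t
  simp only [variationOfConstants, sub_eq_add_neg, exp_add_smul, ← mulVec_mulVec,
    intervalIntegral.integral_mulVec _ hint, mulVec_add]

theorem hasDerivAt_variationOfConstants {f : ℝ → ι → ℝ} (hf : Continuous f) (t0 : ℝ)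
    (p : ι → ℝ) (t : ℝ) :
    HasDerivAt (variationOfConstants A f t0 p)
      (A *ᵥ variationOfConstants A f t0 p t + f t) t := by
  have hcont : Continuous fun s => exp ((-s) • A) *ᵥ f s :=
    ((continuous_exp_smul A).comp continuous_neg).matrix_mulVec hf
  have hy := (hcont.integral_hasStrictDerivAt t0 t).hasDerivAt.const_add (exp ((-t0) • A) *ᵥ p)
  have hx := (hasDerivAt_exp_smul A t).matrix_mulVec hy
  rw [funext (variationOfConstants_eq A hf t0 p)]
  refine hx.congr_deriv ?_
  rw [mulVec_mulVec, ← exp_add_smul, add_neg_cancel, zero_smul, exp_zero, one_mulVec,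
    mulVec_mulVec, add_comm]

variable (B : Matrix ι κ ℝ)

noncomputable def gramianControl (t1 : ℝ) (c : ι → ℝ) (s : ℝ) : κ → ℝ :=
  c ᵥ* (exp ((t1 - s) • A) * B)

theorem continuous_gramianControl (t1 : ℝ) (c : ι → ℝ) :
    Continuous (gramianControl A B t1 c) :=
  continuous_const.matrix_vecMul ((continuous_exp_sub_smul A t1).matrix_mul continuous_const)

variable [Fintype κ]

noncomputable def gramian (t0 t1 : ℝ) : Matrix ι ι ℝ :=
  ∫ s in t0..t1, exp ((t1 - s) • A) * B * (exp ((t1 - s) • A) * B)ᵀ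

theorem gramian_mulVec (t0 t1 : ℝ) (c : ι → ℝ) :
    gramian A B t0 t1 *ᵥ c =
      ∫ s in t0..t1, exp ((t1 - s) • A) *ᵥ (B *ᵥ gramianControl A B t1 c s) := by
  have hEB : Continuous fun s => exp ((t1 - s) • A) * B :=
    (continuous_exp_sub_smul A t1).matrix_mul continuous_const
  have hcont : Continuous fun s => exp ((t1 - s) • A) * B * (exp ((t1 - s) • A) * B)ᵀ :=
    hEB.matrix_mul hEB.matrix_transpose
  rw [gramian, intervalIntegral.integral_mulVec_const c hcont]
  simp only [gramianControl, mulVec_mulVec, ← mulVec_transpose, Matrix.mul_assoc]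

theorem gramianControl_variationOfConstants (t0 t1 : ℝ) (p c : ι → ℝ) :
    variationOfConstants A (fun s => B *ᵥ gramianControl A B t1 c s) t0 p t1 =
      exp ((t1 - t0) • A) *ᵥ p + gramian A B t0 t1 *ᵥ c := by
  rw [gramian_mulVec, variationOfConstants]

theorem dotProduct_gramian_mulVec (t0 t1 : ℝ) (c : ι → ℝ) :
    c ⬝ᵥ gramian A B t0 t1 *ᵥ c =
      ∫ s in t0..t1, gramianControl A B t1 c s ⬝ᵥ gramianControl A B t1 c s := by
  have hcont : Continuous fun s => exp ((t1 - s) • A) *ᵥ (B *ᵥ gramianControl A B t1 c s) :=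
    (continuous_exp_sub_smul A t1).matrix_mulVec
      (continuous_const.matrix_mulVec (continuous_gramianControl A B t1 c))
  rw [gramian_mulVec, intervalIntegral.dotProduct_integral c (hcont.intervalIntegrable t0 t1)]
  simp [gramianControl, dotProduct_mulVec]

theorem gramianControl_eq_zero_of_dotProduct_gramian_mulVec_eq_zero {t0 t1 : ℝ} (h : t0 < t1)
    {c : ι → ℝ} (hc : c ⬝ᵥ gramian A B t0 t1 *ᵥ c = 0) {s : ℝ} (hs : s ∈ Icc t0 t1) :
    gramianControl A B t1 c s = 0 := by
  set u := gramianControl A B t1 c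
  have hcont : Continuous fun s => u s ⬝ᵥ u s :=
    (continuous_gramianControl A B t1 c).dotProduct (continuous_gramianControl A B t1 c)
  have hnonneg (s : ℝ) : 0 ≤ u s ⬝ᵥ u s := Finset.sum_nonneg fun i _ => mul_self_nonneg _
  by_contra hne
  have hpos := intervalIntegral.integral_pos h hcont.continuousOn (fun s _ => hnonneg s)
    ⟨s, hs, (hnonneg s).lt_of_ne' (dotProduct_self_eq_zero.not.2 hne)⟩
  rw [← dotProduct_gramian_mulVec, hc] at hpos
  exact hpos.false

theorem vecMul_exp_smul_vecMul_pow_mul_eq_zero {U : Set ℝ} (hU : IsOpen U) {w : ι → ℝ}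
    (hw : ∀ r ∈ U, w ᵥ* exp (r • A) ᵥ* B = 0) (k : ℕ) :
    ∀ r ∈ U, w ᵥ* exp (r • A) ᵥ* (A ^ k * B) = 0 := by
  induction k with
  | zero => simpa using hw
  | succ k ih =>
    intro r hr
    have hderiv : HasDerivAt (fun r => w ᵥ* exp (r • A) ᵥ* (A ^ k * B))
        (w ᵥ* exp (r • A) ᵥ* (A ^ (k + 1) * B)) r := by
      convert ((hasDerivAt_exp_smul A r).const_vecMul w).vecMul_const (A ^ k * B) using 1
      rw [((Commute.refl A).smul_right r).exp_right.eq]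
      simp only [vecMul_vecMul, Matrix.mul_assoc, pow_succ']
    exact hderiv.eq_zero_of_eqOn_zero hU hr ih

theorem isUnit_gramian (hK : ∀ w : ι → ℝ, (∀ k : ℕ, w ᵥ* (A ^ k * B) = 0) → w = 0) {t0 t1 : ℝ}
    (h : t0 < t1) : IsUnit (gramian A B t0 t1) := by
  rw [← mulVec_injective_iff_isUnit, ← coe_mulVecLin, ← LinearMap.ker_eq_bot,
    LinearMap.ker_eq_bot']
  intro c hc
  have hquad : c ⬝ᵥ gramian A B t0 t1 *ᵥ c = 0 := by
    rw [← mulVecLin_apply, hc, dotProduct_zero]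
  have hvanish : ∀ r ∈ Ioo 0 (t1 - t0), c ᵥ* exp (r • A) ᵥ* B = 0 := fun r hr => by
    simpa [gramianControl, vecMul_vecMul] using
      gramianControl_eq_zero_of_dotProduct_gramian_mulVec_eq_zero A B h hquad (s := t1 - r)
        ⟨by linarith [hr.2], by linarith [hr.1]⟩
  have hmid : (t1 - t0) / 2 ∈ Ioo 0 (t1 - t0) := ⟨by linarith, by linarith⟩
  have hw : c ᵥ* exp (((t1 - t0) / 2) • A) = 0 :=
    hK _ fun k => vecMul_exp_smul_vecMul_pow_mul_eq_zero A B isOpen_Ioo hvanish k _ hmid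
  exact vecMul_injective_of_isUnit (isUnit_exp _) (hw.trans (zero_vecMul _).symm)

theorem exists_continuous_control
    (hK : ∀ w : ι → ℝ, (∀ k : ℕ, w ᵥ* (A ^ k * B) = 0) → w = 0) {t0 t1 : ℝ} (h : t0 < t1)
    (p q : ι → ℝ) :
    ∃ u : ℝ → κ → ℝ, Continuous u ∧ variationOfConstants A (fun s => B *ᵥ u s) t0 p t1 = q := by
  obtain ⟨c, hc⟩ := mulVec_surjective_iff_isUnit.2 (isUnit_gramian A B hK h)
    (q - exp ((t1 - t0) • A) *ᵥ p)
  refine ⟨gramianControl A B t1 c, continuous_gramianControl A B t1 c, ?_⟩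
  rw [gramianControl_variationOfConstants, hc, add_sub_cancel]

end LinearControl

open LinearControl

/-- Kalman rank condition, sufficiency: if the controllability matrix
`[B, AB, …, A^{n-1}B]` has rank `n`, then the linear system `ẋ = Ax + Bu` is controllable:
any state `p` can be steered to any state `q` over any time interval `[t₀, t₁]` by a
continuous control. -/
theorem stmt_13 (n m : ℕ) (A : Matrix (Fin n) (Fin n) ℝ) (B : Matrix (Fin n) (Fin m) ℝ)
    (hrank : (Matrix.of fun (i : Fin n) (jk : Fin n × Fin m) =>
        (A ^ (jk.1 : ℕ) * B) i jk.2).rank = n) :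
    ∀ (p q : Fin n → ℝ) (t0 t1 : ℝ), t0 < t1 →
      ∃ u : ℝ → (Fin m → ℝ), Continuous u ∧
        ∃ x : ℝ → (Fin n → ℝ),
          x t0 = p ∧ x t1 = q ∧
          ∀ t, HasDerivAt x (A.mulVec (x t) + B.mulVec (u t)) t := by
  intro p q t0 t1 h
  have hK (w : Fin n → ℝ) (hw : ∀ k : ℕ, w ᵥ* (A ^ k * B) = 0) : w = 0 :=
    eq_zero_of_forall_vecMul_pow_mul_eq_zero (N := n) (hrank.trans (Fintype.card_fin n).symm)
      fun k => hw k
  obtain ⟨u, hu, hx⟩ := exists_continuous_control A B hK h p q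
  exact ⟨u, hu, variationOfConstants A (fun s => B *ᵥ u s) t0 p,
    variationOfConstants_self A _ t0 p, hx,
    hasDerivAt_variationOfConstants A (continuous_const.matrix_mulVec hu) t0 p⟩
end
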